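/- Let A = {a,b,c}, m ≥ 4, and x₁, x₂ ≥ 1 with x₁ + x₂ = m - 3. If (x₂ + 1) is divisible by (x₁ + 1), then x₂ ≥ x₁ and the two-sided infinite word of period 3(m-1) obtained by repeating a^{x₁+1} b^{x₂+1} c^{x₁+1} a^{x₂+1} b^{x₁+1} c^{x₂+1} avoids the set {a⋄^{m-2}a, b⋄^{m-2}b, c⋄^{m-2}c, a⋄^{m-2}b, b⋄^{m-2}c, a⋄^{x₁}c⋄^{x₂}c}. -/
import Mathlib


/-- The three-letter alphabet. -/
inductive ABC | a | b | c
deriving DecidableEq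
open ABC

/-- A partial word of length `m` over alphabet `A`. -/
abbrev PW (m : ℕ) (A : Type) := Fin m → Option A

/-- A two-sided infinite word `w` meets a partial word `u`. -/
def Meets {m : ℕ} {A : Type} (w : ℤ → A) (u : PW m A) : Prop :=
  ∃ i : ℤ, ∀ j : Fin m, ∀ x : A, u j = some x → w (i + (j : ℕ)) = x

/-- A set of partial words is unavoidable over `A`. -/
def Unavoidable {m : ℕ} {A : Type} (X : Set (PW m A)) : Prop :=
  ∀ w : ℤ → A, ∃ u ∈ X, Meets w u

/-- A set of partial words is avoidable over `A`. -/
def Avoidable {m : ℕ} {A : Type} (X : Set (PW m A)) : Prop :=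
  ∃ w : ℤ → A, ∀ u ∈ X, ¬ Meets w u

/-- The partial word `x ⋄^(m-2) y` of length `m`: first letter `x`, last letter `y`,
holes in between. -/
def oneHole {A : Type} (m : ℕ) (x y : A) : PW m A :=
  fun j => if (j : ℕ) = 0 then some x else if (j : ℕ) = m - 1 then some y else none

/-- The partial word `x ⋄^(p-1) d ⋄^(m-p-2) y` of length `m`: first letter `x`,
letter `d` at position `p`, last letter `y`, holes elsewhere. -/
def twoDef {A : Type} (m : ℕ) (x d y : A) (p : ℕ) : PW m A :=
  fun j => if (j : ℕ) = 0 then some x else if (j : ℕ) = p then some d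
    else if (j : ℕ) = m - 1 then some y else none

/-- The two-sided infinite word of period `P` repeating the block `f` (given on `[0, P)`). -/
def periodic {A : Type} (P : ℕ) (f : ℕ → A) : ℤ → A :=
  fun i => f ((i % (P : ℤ)).toNat)

def gw (x₁ x₂ n : ℕ) : ABC :=
  if n < x₁ + 1 then a
  else if n < x₁ + x₂ + 2 then b
  else if n < 2 * x₁ + x₂ + 3 then c
  else if n < 2 * x₁ + 2 * x₂ + 4 then a
  else if n < 3 * x₁ + 2 * x₂ + 5 then b
  else c

lemma gw_a1 {x₁ x₂ n : ℕ} (h : n < x₁ + 1) : gw x₁ x₂ n = a := if_pos h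
lemma gw_b1 {x₁ x₂ n : ℕ} (h1 : x₁ + 1 ≤ n) (h2 : n < x₁ + x₂ + 2) : gw x₁ x₂ n = b := by
  unfold gw; rw [if_neg (by omega), if_pos h2]
lemma gw_c1 {x₁ x₂ n : ℕ} (h1 : x₁ + x₂ + 2 ≤ n) (h2 : n < 2*x₁ + x₂ + 3) : gw x₁ x₂ n = c := by
  unfold gw; rw [if_neg (by omega), if_neg (by omega), if_pos h2]
lemma gw_a2 {x₁ x₂ n : ℕ} (h1 : 2*x₁ + x₂ + 3 ≤ n) (h2 : n < 2*x₁ + 2*x₂ + 4) : gw x₁ x₂ n = a := by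
  unfold gw; rw [if_neg (by omega), if_neg (by omega), if_neg (by omega), if_pos h2]
lemma gw_b2 {x₁ x₂ n : ℕ} (h1 : 2*x₁ + 2*x₂ + 4 ≤ n) (h2 : n < 3*x₁ + 2*x₂ + 5) : gw x₁ x₂ n = b := by
  unfold gw; rw [if_neg (by omega), if_neg (by omega), if_neg (by omega), if_neg (by omega), if_pos h2]
lemma gw_c2 {x₁ x₂ n : ℕ} (h1 : 3*x₁ + 2*x₂ + 5 ≤ n) : gw x₁ x₂ n = c := by
  unfold gw
  rw [if_neg (by omega), if_neg (by omega), if_neg (by omega), if_neg (by omega), if_neg (by omega)]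

lemma gw_shift {x₁ x₂ : ℕ} (hle : x₁ ≤ x₂) {r : ℕ} (hr : r < 3*(x₁+x₂+2)) :
    gw x₁ x₂ ((r + (x₁ + x₂ + 2)) % (3*(x₁+x₂+2))) =
      (match gw x₁ x₂ r with | a => c | b => a | c => b) := by
  rcases lt_or_ge r (x₁+1) with h1 | h1
  · rw [gw_a1 h1, Nat.mod_eq_of_lt (by omega), gw_c1 (by omega) (by omega)]
  rcases lt_or_ge r (x₁+x₂+2) with h2 | h2
  · rw [gw_b1 h1 h2, Nat.mod_eq_of_lt (by omega), gw_a2 (by omega) (by omega)]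
  rcases lt_or_ge r (2*x₁+x₂+3) with h3 | h3
  · rw [gw_c1 h2 h3, Nat.mod_eq_of_lt (by omega), gw_b2 (by omega) (by omega)]
  rcases lt_or_ge r (2*x₁+2*x₂+4) with h4 | h4
  · rw [gw_a2 h3 h4, Nat.mod_eq_of_lt (by omega), gw_c2 (by omega)]
  rcases lt_or_ge r (3*x₁+2*x₂+5) with h5 | h5
  · rw [gw_b2 h4 h5, show r + (x₁+x₂+2) = (r - (2*x₁+2*x₂+4)) + 3*(x₁+x₂+2) from by omega,
      Nat.add_mod_right, Nat.mod_eq_of_lt (by omega), gw_a1 (by omega)]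
  · rw [gw_c2 h5, show r + (x₁+x₂+2) = (r - (2*x₁+2*x₂+4)) + 3*(x₁+x₂+2) from by omega,
      Nat.add_mod_right, Nat.mod_eq_of_lt (by omega), gw_b1 (by omega) (by omega)]

lemma gw_shiftk {x₁ x₂ : ℕ} (hx1 : 1 ≤ x₁) (hle : x₁ ≤ x₂) {r : ℕ} (hr : r < 3*(x₁+x₂+2))
    (ha : gw x₁ x₂ r = a) : gw x₁ x₂ ((r + (x₁ + 1)) % (3*(x₁+x₂+2))) ≠ c := by
  rcases lt_or_ge r (x₁+1) with h1 | h1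
  · rw [Nat.mod_eq_of_lt (by omega), gw_b1 (by omega) (by omega)]; simp
  rcases lt_or_ge r (x₁+x₂+2) with h2 | h2
  · rw [gw_b1 h1 h2] at ha; simp at ha
  rcases lt_or_ge r (2*x₁+x₂+3) with h3 | h3
  · rw [gw_c1 h2 h3] at ha; simp at ha
  rcases lt_or_ge r (2*x₁+2*x₂+4) with h4 | h4
  · rcases lt_or_ge (r + (x₁+1)) (2*x₁+2*x₂+4) with h | h
    · rw [Nat.mod_eq_of_lt (by omega), gw_a2 (by omega) h]; simp
    · rw [Nat.mod_eq_of_lt (by omega), gw_b2 h (by omega)]; simp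
  rcases lt_or_ge r (3*x₁+2*x₂+5) with h5 | h5
  · rw [gw_b2 h4 h5] at ha; simp at ha
  · rw [gw_c2 h5] at ha; simp at ha

lemma emod_toNat_lt (i : ℤ) {P : ℕ} (hP : 0 < P) : (i % (P:ℤ)).toNat < P := by
  have h1 : (0:ℤ) < (P:ℤ) := by exact_mod_cast hP
  have h2 := Int.emod_lt_of_pos i h1
  have h3 := Int.emod_nonneg i (by omega : (P:ℤ) ≠ 0)
  omega

lemma periodic_add_nat {A : Type} (P : ℕ) (hP : 0 < P) (f : ℕ → A) (i : ℤ) (t : ℕ) :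
    periodic P f (i + (t:ℤ)) = f (((i % (P:ℤ)).toNat + t) % P) := by
  unfold periodic
  congr 1
  have h1 : 0 ≤ i % (P:ℤ) := Int.emod_nonneg i (by exact_mod_cast hP.ne')
  have h2 : ((i % (P:ℤ)).toNat : ℤ) = i % (P:ℤ) := Int.toNat_of_nonneg h1
  have h3 : (i + (t:ℤ)) % (P:ℤ) = ((((i % (P:ℤ)).toNat + t) % P : ℕ) : ℤ) := by
    push_cast
    rw [h2]
    exact (Int.emod_add_emod _ _ _).symm
  omega

lemma main_onehole (x₁ x₂ : ℕ) (hle : x₁ ≤ x₂) (x y : ABC)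
    (hxy : (match x with | a => ABC.c | b => ABC.a | c => ABC.b) ≠ y) :
    ¬ Meets (periodic (3*(x₁+x₂+2)) (gw x₁ x₂)) (oneHole (x₁+x₂+3) x y) := by
  rintro ⟨i, h⟩
  have hPpos : 0 < 3*(x₁+x₂+2) := by omega
  have hrlt := emod_toNat_lt i hPpos
  have e0 : gw x₁ x₂ ((i % ((3*(x₁+x₂+2):ℕ):ℤ)).toNat) = x := by
    have h0 := (periodic_add_nat _ hPpos (gw x₁ x₂) i 0).symm.trans
      (h ⟨0, by omega⟩ x (show (if (0:ℕ) = 0 then some x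
        else if (0:ℕ) = x₁+x₂+2 then some y else none) = some x from if_pos rfl))
    rwa [Nat.add_zero, Nat.mod_eq_of_lt hrlt] at h0
  have e1 : gw x₁ x₂ (((i % ((3*(x₁+x₂+2):ℕ):ℤ)).toNat + (x₁+x₂+2)) % (3*(x₁+x₂+2))) = y :=
    (periodic_add_nat _ hPpos (gw x₁ x₂) i (x₁+x₂+2)).symm.trans
      (h ⟨x₁+x₂+2, by omega⟩ y (show (if x₁+x₂+2 = 0 then some x
        else if x₁+x₂+2 = x₁+x₂+2 then some y else none) = some y from by
          rw [if_neg (by omega), if_pos rfl]))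
  have hs := gw_shift hle hrlt
  rw [e0, e1] at hs
  exact hxy hs.symm

lemma main_twodef (x₁ x₂ : ℕ) (hx1 : 1 ≤ x₁) (hle : x₁ ≤ x₂) :
    ¬ Meets (periodic (3*(x₁+x₂+2)) (gw x₁ x₂)) (twoDef (x₁+x₂+3) ABC.a ABC.c ABC.c (x₁+1)) := by
  rintro ⟨i, h⟩
  have hPpos : 0 < 3*(x₁+x₂+2) := by omega
  have hrlt := emod_toNat_lt i hPpos
  have e0 : gw x₁ x₂ ((i % ((3*(x₁+x₂+2):ℕ):ℤ)).toNat) = a := by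
    have h0 := (periodic_add_nat _ hPpos (gw x₁ x₂) i 0).symm.trans
      (h ⟨0, by omega⟩ a (show (if (0:ℕ) = 0 then some ABC.a
        else if (0:ℕ) = x₁+1 then some ABC.c
        else if (0:ℕ) = x₁+x₂+2 then some ABC.c else none) = some ABC.a from if_pos rfl))
    rwa [Nat.add_zero, Nat.mod_eq_of_lt hrlt] at h0
  have ek : gw x₁ x₂ (((i % ((3*(x₁+x₂+2):ℕ):ℤ)).toNat + (x₁+1)) % (3*(x₁+x₂+2))) = c :=
    (periodic_add_nat _ hPpos (gw x₁ x₂) i (x₁+1)).symm.trans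
      (h ⟨x₁+1, by omega⟩ c (show (if x₁+1 = 0 then some ABC.a
        else if x₁+1 = x₁+1 then some ABC.c
        else if x₁+1 = x₁+x₂+2 then some ABC.c else none) = some ABC.c from by
          rw [if_neg (by omega), if_pos rfl]))
  exact gw_shiftk hx1 hle hrlt e0 ek

/-- If (x₁+1) ∣ (x₂+1), then x₂ ≥ x₁ and the word repeating
a^(x₁+1) b^(x₂+1) c^(x₁+1) a^(x₂+1) b^(x₁+1) c^(x₂+1) avoids
{a⋄^(m-2)a, b⋄^(m-2)b, c⋄^(m-2)c, a⋄^(m-2)b, b⋄^(m-2)c, a⋄^(x₁)c⋄^(x₂)c}. -/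
theorem stmt_4 (m x₁ x₂ : ℕ) (hm : 4 ≤ m) (hx₁ : 1 ≤ x₁) (hx₂ : 1 ≤ x₂)
    (hsum : x₁ + x₂ = m - 3) (hdvd : (x₁ + 1) ∣ (x₂ + 1)) :
    x₁ ≤ x₂ ∧
    (∀ u ∈ ({oneHole m a a, oneHole m b b, oneHole m c c, oneHole m a b,
             oneHole m b c, twoDef m a c c (x₁ + 1)} : Set (PW m ABC)),
      ¬ Meets (periodic (3 * (m - 1)) (fun n =>
        if n < x₁ + 1 then a
        else if n < x₁ + x₂ + 2 then b
        else if n < 2 * x₁ + x₂ + 3 then c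
        else if n < 2 * x₁ + 2 * x₂ + 4 then a
        else if n < 3 * x₁ + 2 * x₂ + 5 then b
        else c)) u) := by
  have hle : x₁ ≤ x₂ := by
    have := Nat.le_of_dvd (by omega) hdvd; omega
  obtain rfl : m = x₁ + x₂ + 3 := by omega
  refine ⟨hle, ?_⟩
  intro u hu
  simp only [Set.mem_insert_iff, Set.mem_singleton_iff] at hu
  rcases hu with rfl | rfl | rfl | rfl | rfl | rfl
  · exact main_onehole x₁ x₂ hle a a (by decide)
  · exact main_onehole x₁ x₂ hle b b (by decide)
  · exact main_onehole x₁ x₂ hle c c (by decide)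
  · exact main_onehole x₁ x₂ hle a b (by decide)
  · exact main_onehole x₁ x₂ hle b c (by decide)
  · exact main_twodef x₁ x₂ hx₁ hle
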